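/- arXiv:1307.5377 — 2 statements merged into one kernel-verified Lean document; each statement's English description precedes it below -/
import Mathlib

section
/- Let (σ,η): (A,λ,L) → (A',λ',L) be a Pom_L-open morphism of labelled asynchronous systems. Then for every n ≥ 0 the images of the label maps coincide: λ_n(Q_n(A)) = λ'_n(Q_n(A')) as subsets of the set of finite subsets of L. -/
/-- An asynchronous (transition) system: a state space with an initial state,
in which every event occurs in at least one transition. -/
structure AsyncSystem (S E : Type) where
  init : S
  indep : E → E → Prop
  tran : S → E → S → Prop
  indep_symm : ∀ a b, indep a b → indep b a
  indep_irrefl : ∀ a, ¬ indep a a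
  det : ∀ s a s' s'', tran s a s' → tran s a s'' → s' = s''
  diamond : ∀ a b s s' s'', indep a b → tran s a s' → tran s' b s'' →
    ∃ s₁, tran s b s₁ ∧ tran s₁ a s''
  event_occurs : ∀ e, ∃ s₁ s₂, tran s₁ e s₂

/-- A state is reachable if there is a finite sequence of transitions from the
initial state to it. -/
def AsyncSystem.Reachable {S E : Type} (A : AsyncSystem S E) (s : S) : Prop :=
  Relation.ReflTransGen (fun x y => ∃ e, A.tran x e y) A.init s

/-- `A.rebase s` is the asynchronous system `A(s)`: `A` with initial state replaced by `s`. -/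
def AsyncSystem.rebase {S E : Type} (A : AsyncSystem S E) (s : S) : AsyncSystem S E :=
  { A with init := s }

/-- `A.Exec s w t` means `s · w = t`: the word `w` can be executed from `s`, ending in `t`. -/
def AsyncSystem.Exec {S E : Type} (A : AsyncSystem S E) : S → List E → S → Prop
  | s, [], t => s = t
  | s, e :: w, t => ∃ u, A.tran s e u ∧ A.Exec u w t

/-- A morphism of asynchronous systems with a total event map `η`. -/
def IsMorphism {S E S' E' : Type} (A : AsyncSystem S E) (A' : AsyncSystem S' E')
    (σ : S → S') (η : E → E') : Prop :=
  σ A.init = A'.init ∧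
  (∀ s₁ e s₂, A.tran s₁ e s₂ → A'.tran (σ s₁) (η e) (σ s₂)) ∧
  (∀ e₁ e₂, A.indep e₁ e₂ → A'.indep (η e₁) (η e₂))

/-- An open morphism of asynchronous systems (its event map is total). -/
def IsOpenMorphism {S E S' E' : Type} (A : AsyncSystem S E) (A' : AsyncSystem S' E')
    (σ : S → S') (η : E → E') : Prop :=
  IsMorphism A A' σ η ∧
  (∀ s e' u', A'.tran (σ s) e' u' → ∃ e u, A.tran s e u ∧ η e = e' ∧ σ u = u') ∧
  (∀ s, A.Reachable s → ∀ e₁ e₂ u v, A.tran s e₁ u → A.tran u e₂ v →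
    A'.indep (η e₁) (η e₂) → A.indep e₁ e₂)

/-- A `Pom_L`-open morphism of labelled asynchronous systems: an open morphism
preserving labels. -/
def IsPomOpen {S E S' E' L : Type} (A : AsyncSystem S E) (lab : E → L)
    (A' : AsyncSystem S' E') (lab' : E' → L) (σ : S → S') (η : E → E') : Prop :=
  IsOpenMorphism A A' σ η ∧ ∀ e, lab' (η e) = lab e

/-- Two labelled asynchronous systems are `Pom_L`-bisimilar if there is a third labelled
asynchronous system with `Pom_L`-open morphisms to each of them. -/
def Bisimilar {S E S' E' L : Type} (A : AsyncSystem S E) (lab : E → L)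
    (A' : AsyncSystem S' E') (lab' : E' → L) : Prop :=
  ∃ (S'' E'' : Type) (A'' : AsyncSystem S'' E'') (lab'' : E'' → L)
    (σ : S'' → S) (η : E'' → E) (σ' : S'' → S') (η' : E'' → E'),
    IsPomOpen A'' lab'' A lab σ η ∧ IsPomOpen A'' lab'' A' lab' σ' η'

/-- `Qn A n`: pairs of a reachable state `s` and an `n`-tuple of pairwise independent
events executable from `s`.  For `n = 0` this is the set of reachable states. -/
def Qn {S E : Type} (A : AsyncSystem S E) (n : ℕ) : Set (S × (Fin n → E)) :=
  {p | A.Reachable p.1 ∧ (∃ t, A.Exec p.1 (List.ofFn p.2) t) ∧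
    ∀ i j : Fin n, i < j → A.indep (p.2 i) (p.2 j)}

/-- The vertex set `λ⁺E` of the simplicial scheme of a labelled asynchronous system. -/
def VertexSet {S E L : Type} (A : AsyncSystem S E) (lab : E → L) : Set L :=
  {l | ∃ (a : E) (s u : S), A.Reachable s ∧ A.tran s a u ∧ lab a = l}

/-- The simplices of the simplicial scheme of a labelled asynchronous system:
finite nonempty sets `{λ(a₁), …, λ(a_k)}` (`k ≥ 1`) where the `aᵢ` are pairwise
independent and `s · a₁ ⋯ a_k` is defined for some reachable state `s`. -/
def Simplices {S E L : Type} (A : AsyncSystem S E) (lab : E → L) : Set (Set L) :=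
  {X | ∃ (k : ℕ) (a : Fin (k + 1) → E) (s : S),
    A.Reachable s ∧
    (∀ i j, i < j → A.indep (a i) (a j)) ∧
    (∃ t, A.Exec s (List.ofFn a) t) ∧
    X = Set.range fun i => lab (a i)}

/-!
An open morphism maps `Q_n(A)` onto `Q_n(A')`, and `λ'_n ∘ (σ, η) = λ_n` because labels are
preserved, so the two label images coincide. Reachable states and executions lift along an open
morphism by its path-lifting property; independence of the lifted events is recovered letter by
letter: condition (3) of openness gives independence of two consecutive events, and the diamond
property lets the first event move past the second, so the argument can be repeated.
-/

namespace IsMorphism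

variable {S E S' E' : Type} {A : AsyncSystem S E} {A' : AsyncSystem S' E'}
  {σ : S → S'} {η : E → E'}

theorem reachable_map (hm : IsMorphism A A' σ η) {s : S} (hs : A.Reachable s) :
    A'.Reachable (σ s) := by
  induction hs with
  | refl => exact hm.1 ▸ .refl
  | tail _ hstep ih =>
    obtain ⟨e, he⟩ := hstep
    exact ih.tail ⟨η e, hm.2.1 _ _ _ he⟩

theorem exec_map (hm : IsMorphism A A' σ η) {s t : S} {w : List E} (hw : A.Exec s w t) :
    A'.Exec (σ s) (w.map η) (σ t) := by
  induction w generalizing s with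
  | nil => exact congrArg σ hw
  | cons e w ih =>
    obtain ⟨u, hu, hw⟩ := hw
    exact ⟨σ u, hm.2.1 _ _ _ hu, ih hw⟩

theorem mapsTo_Qn (hm : IsMorphism A A' σ η) (n : ℕ) :
    Set.MapsTo (Prod.map σ (η ∘ ·)) (Qn A n) (Qn A' n) := by
  rintro ⟨s, e⟩ ⟨hs, ⟨t, ht⟩, hindep⟩
  refine ⟨hm.reachable_map hs, ⟨σ t, ?_⟩, fun i j hij => hm.2.2 _ _ (hindep i j hij)⟩
  have ht' := hm.exec_map ht
  rwa [List.map_ofFn] at ht'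

end IsMorphism

namespace IsOpenMorphism

variable {S E S' E' : Type} {A : AsyncSystem S E} {A' : AsyncSystem S' E'}
  {σ : S → S'} {η : E → E'}

theorem exists_reachable_of_reachable (ho : IsOpenMorphism A A' σ η) {s' : S'}
    (hs' : A'.Reachable s') : ∃ s, A.Reachable s ∧ σ s = s' := by
  induction hs' with
  | refl => exact ⟨A.init, .refl, ho.1.1⟩
  | tail _ hstep ih =>
    obtain ⟨s, hs, rfl⟩ := ih
    obtain ⟨e', he'⟩ := hstep
    obtain ⟨e, u, hu, -, rfl⟩ := ho.2.1 s e' _ he'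
    exact ⟨u, hs.tail ⟨e, hu⟩, rfl⟩

theorem exists_exec_of_exec (ho : IsOpenMorphism A A' σ η) {n : ℕ} {s : S} {e' : Fin n → E'}
    {t' : S'} (h : A'.Exec (σ s) (List.ofFn e') t') :
    ∃ (e : Fin n → E) (t : S), A.Exec s (List.ofFn e) t ∧ η ∘ e = e' := by
  induction n generalizing s with
  | zero => exact ⟨Fin.elim0, s, rfl, funext fun i => i.elim0⟩
  | succ n ih =>
    rw [List.ofFn_succ] at h
    obtain ⟨u', hu', hrest⟩ := h
    obtain ⟨a, u, hu, ha, rfl⟩ := ho.2.1 s _ u' hu'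
    obtain ⟨e, t, he, hη⟩ := ih hrest
    refine ⟨Fin.cons a e, t, ?_, ?_⟩
    · rw [List.ofFn_succ]
      exact ⟨u, hu, by simpa only [Fin.cons_zero, Fin.cons_succ] using he⟩
    · rw [Fin.comp_cons, ha, hη]
      exact Fin.cons_self_tail e'

theorem indep_of_exec (ho : IsOpenMorphism A A' σ η) {w : List E} {s u t : S} {e : E}
    (hs : A.Reachable s) (he : A.tran s e u) (hw : A.Exec u w t)
    (hindep : ∀ f ∈ w, A'.indep (η e) (η f)) : ∀ f ∈ w, A.indep e f := by
  induction w generalizing s u with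
  | nil => simp
  | cons g w ih =>
    obtain ⟨v, hv, hw⟩ := hw
    have heg : A.indep e g := ho.2.2 s hs e g u v he hv (hindep g List.mem_cons_self)
    obtain ⟨s₁, hs₁, he₁⟩ := A.diamond e g s u v heg he hv
    rw [List.forall_mem_cons]
    exact ⟨heg, ih (hs.tail ⟨g, hs₁⟩) he₁ hw fun f hf => hindep f (List.mem_cons_of_mem g hf)⟩

theorem pairwise_indep_of_exec (ho : IsOpenMorphism A A' σ η) {w : List E} {s t : S}
    (hs : A.Reachable s) (hw : A.Exec s w t) (hindep : (w.map η).Pairwise A'.indep) :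
    w.Pairwise A.indep := by
  induction w generalizing s with
  | nil => exact .nil
  | cons e w ih =>
    obtain ⟨u, hu, hw⟩ := hw
    rw [List.map_cons, List.pairwise_cons, List.forall_mem_map] at hindep
    exact .cons (ho.indep_of_exec hs hu hw hindep.1) (ih (hs.tail ⟨e, hu⟩) hw hindep.2)

theorem image_Qn (ho : IsOpenMorphism A A' σ η) (n : ℕ) :
    Prod.map σ (η ∘ ·) '' Qn A n = Qn A' n := by
  refine (ho.1.mapsTo_Qn n).image_subset.antisymm ?_
  rintro ⟨s', e'⟩ ⟨hs', ⟨t', ht'⟩, hindep'⟩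
  obtain ⟨s, hs, rfl⟩ := ho.exists_reachable_of_reachable hs'
  obtain ⟨e, t, ht, rfl⟩ := ho.exists_exec_of_exec ht'
  have hindep : (List.ofFn e).Pairwise A.indep := by
    refine ho.pairwise_indep_of_exec hs ht ?_
    rwa [List.map_ofFn, List.pairwise_ofFn]
  exact ⟨(s, e), ⟨hs, ⟨t, ht⟩, List.pairwise_ofFn.mp hindep⟩, rfl⟩

end IsOpenMorphism

/-- for a `Pom_L`-open morphism `(σ, η) : (A, λ, L) → (A', λ', L)` the
images of the label maps `λ_n : Q_n(A) → P^f(L)` and `λ'_n : Q_n(A') → P^f(L)`,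
`(s, e₁, …, e_n) ↦ {λ(e₁), …, λ(e_n)}`, coincide for every `n ≥ 0`. -/
theorem label_images_eq {S E S' E' L : Type}
    (A : AsyncSystem S E) (lab : E → L) (A' : AsyncSystem S' E') (lab' : E' → L)
    (σ : S → S') (η : E → E')
    (hpom : IsPomOpen A lab A' lab' σ η) (n : ℕ) :
    (fun p : S × (Fin n → E) => Set.range fun i => lab (p.2 i)) '' Qn A n =
      (fun p : S' × (Fin n → E') => Set.range fun i => lab' (p.2 i)) '' Qn A' n := by
  obtain ⟨ho, hlab⟩ := hpom
  rw [← ho.image_Qn n, Set.image_image]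
  simp only [Prod.map_snd, Function.comp_apply, hlab]
end

section
/- Let (A,λ,L) and (A',λ',L) be Pom_L-bisimilar labelled asynchronous systems. Then for every word w = a₁⋯a_k ∈ E* with k ≥ 0 such that s₀·w is defined, there exists a word w' = a₁'⋯a_k' ∈ E'* such that s₀'·w' is defined and the simplicial schemes associated to (A(s₀·w),λ,L) and to (A'(s₀'·w'),λ',L) are equal (hence their homology groups are isomorphic in every degree). -/
/-
A `Pom_L`-open morphism `B → C` already identifies the simplicial schemes of `B` and `C`:
reachable states and executable words of `C` lift to `B`, labels and independence are preserved,
and independence is reflected along executions, because an event commuting with a word can be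
moved in front of it by repeated diamonds, where the reflection axiom applies. Openness survives
rebasing at a reachable state. So, given a span `A ← A'' → A'` of open morphisms, lift `w` to a
word of `A''` ending in `t''` and push it down to `A'`: both rebased systems then have the scheme
of `A''(t'')`.
-/

namespace AsyncSystem

variable {S E L : Type} {A : AsyncSystem S E}

theorem exec_append {l₁ l₂ : List E} {s t : S} :
    A.Exec s (l₁ ++ l₂) t ↔ ∃ m, A.Exec s l₁ m ∧ A.Exec m l₂ t := by
  induction l₁ generalizing s with
  | nil => simp [Exec]
  | cons e l ih =>
    simp only [List.cons_append, Exec, ih]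
    constructor
    · rintro ⟨u, hu, m, hum, hmt⟩
      exact ⟨m, ⟨u, hu, hum⟩, hmt⟩
    · rintro ⟨m, ⟨u, hu, hum⟩, hmt⟩
      exact ⟨u, hu, m, hum, hmt⟩

theorem Exec.reachable {l : List E} {s t : S} (h : A.Exec s l t) (hs : A.Reachable s) :
    A.Reachable t := by
  induction l generalizing s with
  | nil => exact h ▸ hs
  | cons e l ih =>
    obtain ⟨u, hu, hut⟩ := h
    exact ih hut (hs.tail ⟨e, hu⟩)

theorem Exec.exists_tran_exec_of_indep {l : List E} {b : E} (hind : ∀ e ∈ l, A.indep e b)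
    {s m v : S} (hex : A.Exec s l m) (hb : A.tran m b v) :
    ∃ u, A.tran s b u ∧ A.Exec u l v := by
  induction l generalizing s with
  | nil => exact ⟨v, hex ▸ hb, rfl⟩
  | cons e l ih =>
    obtain ⟨u, hu, hum⟩ := hex
    obtain ⟨x, hx, hxv⟩ := ih (fun e he => hind e (List.mem_cons_of_mem _ he)) hum
    obtain ⟨y, hy, hyx⟩ := A.diamond e b s u x (hind e List.mem_cons_self) hu hx
    exact ⟨y, hy, x, hyx, hxv⟩

theorem Reachable.of_rebase {s x : S} (hs : A.Reachable s) (hx : (A.rebase s).Reachable x) :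
    A.Reachable x :=
  hs.trans hx

theorem mem_simplices_iff {lab : E → L} {X : Set L} :
    X ∈ Simplices A lab ↔ ∃ l : List E, l ≠ [] ∧ ∃ s, A.Reachable s ∧
      l.Pairwise A.indep ∧ (∃ t, A.Exec s l t) ∧ X = {x | ∃ a ∈ l, lab a = x} := by
  have hrange {n : ℕ} (a : Fin n → E) :
      Set.range (fun i => lab (a i)) = {x | ∃ b ∈ List.ofFn a, lab b = x} := by
    ext x
    simp only [Set.mem_range, Set.mem_ofPred_eq, List.mem_ofFn, exists_exists_eq_and]
  constructor
  · rintro ⟨k, a, s, hs, hI, hex, rfl⟩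
    exact ⟨List.ofFn a, by simp, s, hs, List.pairwise_ofFn.2 hI, hex, hrange a⟩
  · rintro ⟨_ | ⟨e, l⟩, hne, s, hs, hI, hex, rfl⟩
    · exact absurd rfl hne
    · have hget := List.ofFn_get (e :: l)
      rw [← hget] at hI hex
      exact ⟨l.length, (e :: l).get, s, hs, List.pairwise_ofFn.1 hI, hex, by rw [hrange, hget]⟩

end AsyncSystem

open AsyncSystem

section Morphisms

variable {S E S' E' L : Type} {A : AsyncSystem S E} {A' : AsyncSystem S' E'}
  {σ : S → S'} {η : E → E'}

theorem IsMorphism.exec_map_s9 (hf : IsMorphism A A' σ η) {l : List E} {s t : S}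
    (h : A.Exec s l t) : A'.Exec (σ s) (l.map η) (σ t) := by
  induction l generalizing s with
  | nil => exact congrArg σ h
  | cons e l ih =>
    obtain ⟨u, hu, hut⟩ := h
    exact ⟨σ u, hf.2.1 _ _ _ hu, ih hut⟩

theorem IsMorphism.reachable (hf : IsMorphism A A' σ η) {s : S} (h : A.Reachable s) :
    A'.Reachable (σ s) := by
  induction h with
  | refl => exact hf.1 ▸ Relation.ReflTransGen.refl
  | tail _ hst ih =>
    obtain ⟨e, he⟩ := hst
    exact ih.tail ⟨η e, hf.2.1 _ _ _ he⟩

theorem IsOpenMorphism.exists_exec_of_exec_s9 (hf : IsOpenMorphism A A' σ η) {l' : List E'}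
    {s : S} {t' : S'} (h : A'.Exec (σ s) l' t') :
    ∃ (l : List E) (t : S), l.map η = l' ∧ σ t = t' ∧ A.Exec s l t := by
  induction l' generalizing s with
  | nil => exact ⟨[], s, rfl, h, rfl⟩
  | cons e' l' ih =>
    obtain ⟨u', hu', hut'⟩ := h
    obtain ⟨e, u, hu, rfl, rfl⟩ := hf.2.1 s e' u' hu'
    obtain ⟨l, t, rfl, hσt, hut⟩ := ih hut'
    exact ⟨e :: l, t, rfl, hσt, u, hu, hut⟩

theorem IsOpenMorphism.exists_reachable_of_reachable_s9 (hf : IsOpenMorphism A A' σ η)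
    {s' : S'} (h : A'.Reachable s') : ∃ s, A.Reachable s ∧ σ s = s' := by
  induction h with
  | refl => exact ⟨A.init, Relation.ReflTransGen.refl, hf.1.1⟩
  | tail _ hst ih =>
    obtain ⟨s, hs, rfl⟩ := ih
    obtain ⟨e', he'⟩ := hst
    obtain ⟨e, u, hu, -, hσu⟩ := hf.2.1 s e' _ he'
    exact ⟨u, hs.tail ⟨e, hu⟩, hσu⟩

theorem IsOpenMorphism.pairwise_indep_of_map (hf : IsOpenMorphism A A' σ η) {l : List E}
    {s t : S} (hs : A.Reachable s) (hex : A.Exec s l t)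
    (hI : (l.map η).Pairwise A'.indep) : l.Pairwise A.indep := by
  induction l generalizing s with
  | nil => exact List.Pairwise.nil
  | cons e l ih =>
    obtain ⟨u, hu, hut⟩ := hex
    rw [List.map_cons, List.pairwise_cons] at hI
    have hl : l.Pairwise A.indep := ih (hs.tail ⟨e, hu⟩) hut hI.2
    refine hl.cons fun e' he' => ?_
    obtain ⟨l₁, l₂, rfl⟩ := List.append_of_mem he'
    obtain ⟨m, hum, v, hv, -⟩ := exec_append.1 hut
    -- `e'` commutes with `l₁`, so it can be fired right after `e`, where reflection applies
    have hcomm : ∀ f ∈ l₁, A.indep f e' := fun f hf =>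
      (List.pairwise_append.1 hl).2.2 f hf e' List.mem_cons_self
    obtain ⟨x, hx, -⟩ := hum.exists_tran_exec_of_indep hcomm hv
    exact hf.2.2 s hs e e' u x hu hx (hI.1 _ (List.mem_map_of_mem he'))

theorem IsOpenMorphism.rebase (hf : IsOpenMorphism A A' σ η) {s : S} (hs : A.Reachable s) :
    IsOpenMorphism (A.rebase s) (A'.rebase (σ s)) σ η :=
  ⟨⟨rfl, hf.1.2⟩, hf.2.1, fun x hx => hf.2.2 x (hs.of_rebase hx)⟩

variable {lab : E → L} {lab' : E' → L}

theorem IsPomOpen.rebase (hf : IsPomOpen A lab A' lab' σ η) {s : S} (hs : A.Reachable s) :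
    IsPomOpen (A.rebase s) lab (A'.rebase (σ s)) lab' σ η :=
  ⟨hf.1.rebase hs, hf.2⟩

theorem IsPomOpen.vertexSet_eq (hf : IsPomOpen A lab A' lab' σ η) :
    VertexSet A lab = VertexSet A' lab' := by
  ext x
  constructor
  · rintro ⟨a, s, u, hs, ha, rfl⟩
    exact ⟨η a, σ s, σ u, hf.1.1.reachable hs, hf.1.1.2.1 _ _ _ ha, hf.2 a⟩
  · rintro ⟨a', s', u', hs', ha', rfl⟩
    obtain ⟨s, hs, rfl⟩ := hf.1.exists_reachable_of_reachable_s9 hs'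
    obtain ⟨a, u, ha, rfl, -⟩ := hf.1.2.1 s a' u' ha'
    exact ⟨a, s, u, hs, ha, (hf.2 a).symm⟩

theorem IsPomOpen.simplices_eq (hf : IsPomOpen A lab A' lab' σ η) :
    Simplices A lab = Simplices A' lab' := by
  have hlabel (l : List E) :
      {x | ∃ a ∈ l, lab a = x} = {x | ∃ a' ∈ l.map η, lab' a' = x} := by
    simp [hf.2]
  ext X
  simp only [mem_simplices_iff]
  constructor
  · rintro ⟨l, hne, s, hs, hI, ⟨t, hex⟩, rfl⟩
    exact ⟨l.map η, by simpa using hne, σ s, hf.1.1.reachable hs,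
      List.pairwise_map.2 (hI.imp (hf.1.1.2.2 _ _)), ⟨σ t, hf.1.1.exec_map_s9 hex⟩, hlabel l⟩
  · rintro ⟨l', hne, s', hs', hI, ⟨t', hex⟩, rfl⟩
    obtain ⟨s, hs, rfl⟩ := hf.1.exists_reachable_of_reachable_s9 hs'
    obtain ⟨l, t, rfl, -, hex⟩ := hf.1.exists_exec_of_exec_s9 hex
    exact ⟨l, by simpa using hne, s, hs, hf.1.pairwise_indep_of_map hs hex hI, ⟨t, hex⟩,
      (hlabel l).symm⟩

end Morphisms

/-- if `(A, λ, L)` and `(A', λ', L)` are `Pom_L`-bisimilar then for every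
word `w` with `s₀ · w` defined there is a word `w'` with `s₀' · w'` defined such that
the simplicial schemes of `(A(s₀ · w), λ, L)` and `(A'(s₀' · w'), λ', L)` are equal. -/
theorem bisimilar_word_schemes_eq {S E S' E' L : Type}
    (A : AsyncSystem S E) (lab : E → L) (A' : AsyncSystem S' E') (lab' : E' → L)
    (h : Bisimilar A lab A' lab')
    (w : List E) (t : S) (hw : A.Exec A.init w t) :
    ∃ (w' : List E') (t' : S'), w'.length = w.length ∧ A'.Exec A'.init w' t' ∧
      VertexSet (A.rebase t) lab = VertexSet (A'.rebase t') lab' ∧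
      Simplices (A.rebase t) lab = Simplices (A'.rebase t') lab' := by
  obtain ⟨S'', E'', A'', lab'', σ, η, σ', η', hf, hf'⟩ := h
  obtain ⟨w'', t'', rfl, rfl, hw''⟩ := hf.1.exists_exec_of_exec_s9 (hf.1.1.1.symm ▸ hw)
  have ht'' : A''.Reachable t'' := hw''.reachable Relation.ReflTransGen.refl
  have hA := hf.rebase ht''
  have hA' := hf'.rebase ht''
  refine ⟨w''.map η', σ' t'', by simp, hf'.1.1.1 ▸ hf'.1.1.exec_map_s9 hw'', ?_, ?_⟩
  · rw [← hA.vertexSet_eq, hA'.vertexSet_eq]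
  · rw [← hA.simplices_eq, hA'.simplices_eq]
end
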